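/- arXiv:1701.08922 — 6 statements merged into one kernel-verified Lean document; each statement's English description precedes it below -/
import Mathlib

section
/- Let ι be a countable type, a : ι → [0, ∞), w : ι → (0, ∞), and let C ≥ 0 satisfy t · ∑'_{i : w(i) ≥ t} a(i) ≤ C for every t > 0. Then for every s > 0, ∑'_{i : w(i) ≤ s} (w(i))² · a(i) ≤ 2 · C · s. -/
open scoped ENNReal NNReal

open MeasureTheory

open MeasureTheory in
lemma lint_sq (b : ℝ) (hb : 0 ≤ b) :
    ∫⁻ t in Set.Ioo 0 b, ENNReal.ofReal (2*t) = ENNReal.ofReal (b^2) := by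
  rw [← ofReal_integral_eq_lintegral_ofReal]
  · rw [← integral_Ioc_eq_integral_Ioo, ← intervalIntegral.integral_of_le hb,
      intervalIntegral.integral_const_mul, integral_id]
    congr 1; ring
  · exact ((continuous_const.mul continuous_id).integrableOn_Ioc).mono_set Set.Ioo_subset_Ioc_self
  · filter_upwards [self_mem_ae_restrict measurableSet_Ioo] with t ht
    simp only [Pi.zero_apply]
    nlinarith [ht.1]

/-- **Layer-cake estimate for the weak-(1,1) bound** in the Paley-type inequality:
if `a : ι → [0,∞)`, `w : ι → (0,∞)` and `C ≥ 0` satisfy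
`t · ∑'_{i : w i ≥ t} a i ≤ C` for all `t > 0`, then for all `s > 0`,
`∑'_{i : w i ≤ s} (w i)² · a i ≤ 2 C s`. -/
theorem layer_cake_weight_estimate {ι : Type*} [Countable ι]
    (a : ι → ℝ≥0) (w : ι → ℝ) (hw : ∀ i, 0 < w i)
    (C : ℝ) (hC : 0 ≤ C)
    (h : ∀ t : ℝ, 0 < t →
      ENNReal.ofReal t * (∑' i : {i : ι // t ≤ w i}, (a i.1 : ℝ≥0∞)) ≤ ENNReal.ofReal C) :
    ∀ s : ℝ, 0 < s →
      (∑' i : {i : ι // w i ≤ s}, ENNReal.ofReal (w i.1 ^ 2) * (a i.1 : ℝ≥0∞))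
        ≤ ENNReal.ofReal (2 * C * s) := by
  intro s hs
  -- the per-index integrand
  set f : ι → ℝ → ℝ≥0∞ := fun i t =>
    if w i ≤ s then (Set.Ioo (0:ℝ) (w i)).indicator (fun t => ENNReal.ofReal (2*t) * (a i : ℝ≥0∞)) t
    else 0 with hf
  have hfm : ∀ i, Measurable (f i) := by
    intro i
    by_cases hi : w i ≤ s <;> simp only [hf, hi, if_true, if_false]
    · exact ((ENNReal.measurable_ofReal.comp (measurable_const.mul measurable_id)).mul
        measurable_const).indicator measurableSet_Ioo
    · exact measurable_const
  -- Step A: each term equals its lintegral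
  have stepA : ∀ i : {i : ι // w i ≤ s},
      ENNReal.ofReal (w i.1 ^ 2) * (a i.1 : ℝ≥0∞) = ∫⁻ t, f i.1 t := by
    rintro ⟨i, hi⟩
    simp only [hf, hi, if_true]
    rw [lintegral_indicator measurableSet_Ioo, lintegral_mul_const _
      (by fun_prop : Measurable fun t : ℝ => ENNReal.ofReal (2*t)),
      lint_sq _ (hw i).le]
  calc (∑' i : {i : ι // w i ≤ s}, ENNReal.ofReal (w i.1 ^ 2) * (a i.1 : ℝ≥0∞))
      = ∑' i : {i : ι // w i ≤ s}, ∫⁻ t, f i.1 t := tsum_congr stepA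
    _ ≤ ∑' i : ι, ∫⁻ t, f i t := ENNReal.tsum_comp_le_tsum_of_injective Subtype.val_injective _
    _ = ∫⁻ t, ∑' i, f i t := (lintegral_tsum fun i => (hfm i).aemeasurable).symm
    _ ≤ ∫⁻ t, (Set.Ioo (0:ℝ) s).indicator (fun _ => 2 * ENNReal.ofReal C) t := by
        apply lintegral_mono
        intro t
        by_cases ht : t ∈ Set.Ioo (0:ℝ) s
        · rw [Set.indicator_of_mem ht]
          have hb : ∀ i, f i t ≤ Set.indicator {i | t ≤ w i}
              (fun i => ENNReal.ofReal (2*t) * (a i : ℝ≥0∞)) i := by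
            intro i
            by_cases hi : w i ≤ s <;> simp only [hf, hi, if_true, if_false]
            · by_cases hti : t ∈ Set.Ioo (0:ℝ) (w i)
              · rw [Set.indicator_of_mem hti, Set.indicator_of_mem (show i ∈ {i | t ≤ w i} from le_of_lt hti.2)]
              · simp [Set.indicator_of_notMem hti]
            · exact zero_le
          calc ∑' i, f i t ≤ ∑' i, Set.indicator {i | t ≤ w i}
                (fun i => ENNReal.ofReal (2*t) * (a i : ℝ≥0∞)) i := ENNReal.tsum_le_tsum hb
            _ = ∑' i : {i : ι // t ≤ w i}, ENNReal.ofReal (2*t) * (a i.1 : ℝ≥0∞) :=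
                (tsum_subtype _ _).symm
            _ = 2 * (ENNReal.ofReal t * ∑' i : {i : ι // t ≤ w i}, (a i.1 : ℝ≥0∞)) := by
                rw [ENNReal.tsum_mul_left, ENNReal.ofReal_mul (by norm_num : (0:ℝ) ≤ 2)]
                simp [mul_assoc, ENNReal.ofReal_ofNat]
            _ ≤ 2 * ENNReal.ofReal C := by
                exact mul_le_mul_right (h t ht.1) 2
        · have : ∀ i, f i t = 0 := by
            intro i
            by_cases hi : w i ≤ s <;> simp only [hf, hi, if_true, if_false]
            apply Set.indicator_of_notMem
            intro hti
            exact ht ⟨hti.1, lt_of_lt_of_le hti.2 hi⟩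
          rw [Set.indicator_of_notMem ht]
          simp [this]
    _ = ENNReal.ofReal (2 * C * s) := by
        rw [lintegral_indicator measurableSet_Ioo, setLIntegral_const, Real.volume_Ioo]
        rw [show 2 * C * s = 2 * (C * s) by ring, ENNReal.ofReal_mul (by norm_num : (0:ℝ) ≤ 2),
          ENNReal.ofReal_mul hC]
        simp [mul_assoc, ENNReal.ofReal_ofNat]
end

section
/- Let ι be a countable type, a : ι → [0, ∞), λ : ι → [1, ∞), and γ > 0. Suppose sup_{0 < t ≤ 1} t^γ · ∑'_{i ∈ ι} a(i) · exp(−t · λ(i)) < ∞. Then for every natural number m with m > γ, the sum ∑'_{i ∈ ι} a(i) · (λ(i))^{−m} is finite. -/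
open scoped ENNReal NNReal

open MeasureTheory Set

private lemma moments_aux (m : ℕ) (hm : 1 ≤ m) {lam : ℝ} (hlam : 1 ≤ lam) :
    ENNReal.ofReal ((lam ^ m)⁻¹) ≤ ENNReal.ofReal (m * Real.exp 1) *
      ∫⁻ t in Set.Ioc (0:ℝ) 1, ENNReal.ofReal (t ^ (m-1) * Real.exp (-t * lam)) := by
  have hlam0 : 0 < lam := lt_of_lt_of_le one_pos hlam
  have hsub : Set.Ioc (0:ℝ) (1/lam) ⊆ Set.Ioc 0 1 := by
    apply Set.Ioc_subset_Ioc_right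
    rw [div_le_one hlam0]; exact hlam
  have h1 : ∫⁻ t in Set.Ioc (0:ℝ) (1/lam),
      ENNReal.ofReal (t ^ (m-1) * Real.exp (-1)) ≤
      ∫⁻ t in Set.Ioc (0:ℝ) 1, ENNReal.ofReal (t ^ (m-1) * Real.exp (-t * lam)) := by
    refine le_trans ?_ (lintegral_mono_set hsub)
    refine setLIntegral_mono (by measurability) (fun t ht => ?_)
    apply ENNReal.ofReal_le_ofReal
    have ht0 : (0:ℝ) ≤ t := ht.1.le
    apply mul_le_mul_of_nonneg_left _ (by positivity)
    apply Real.exp_le_exp.2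
    have h : t * lam ≤ 1 := by
      have := mul_le_mul_of_nonneg_right ht.2 hlam0.le
      rwa [one_div, inv_mul_cancel₀ (ne_of_gt hlam0)] at this
    linarith
  have h2 : ∫⁻ t in Set.Ioc (0:ℝ) (1/lam), ENNReal.ofReal (t ^ (m-1) * Real.exp (-1))
      = ENNReal.ofReal ((1/lam) ^ m / m * Real.exp (-1)) := by
    rw [← ofReal_integral_eq_lintegral_ofReal]
    · congr 1
      rw [← intervalIntegral.integral_of_le (by positivity : (0:ℝ) ≤ 1/lam)]
      rw [intervalIntegral.integral_mul_const, integral_pow]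
      have hc : ((m-1:ℕ):ℝ) + 1 = m := by
        push_cast [Nat.cast_sub hm]; ring
      have hc2 : m - 1 + 1 = m := Nat.succ_pred_eq_of_pos hm
      rw [hc2, hc, zero_pow (by omega : m ≠ 0), sub_zero]
    · exact ((continuous_pow (m-1)).mul continuous_const).integrableOn_Ioc
    · filter_upwards [ae_restrict_mem measurableSet_Ioc] with t ht
      have ht0 : (0:ℝ) ≤ t := ht.1.le
      positivity
  calc ENNReal.ofReal ((lam ^ m)⁻¹)
      ≤ ENNReal.ofReal (m * Real.exp 1) *
        ∫⁻ t in Set.Ioc (0:ℝ) (1/lam), ENNReal.ofReal (t ^ (m-1) * Real.exp (-1)) := by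
        rw [h2, ← ENNReal.ofReal_mul (by positivity)]
        apply ENNReal.ofReal_le_ofReal
        have hmpos : (0:ℝ) < m := by exact_mod_cast hm
        have he : Real.exp (-1) = (Real.exp 1)⁻¹ := Real.exp_neg 1
        rw [he, div_pow, one_pow]
        have heq : ↑m * Real.exp 1 * (1 / lam ^ m / ↑m * (Real.exp 1)⁻¹) = (lam ^ m)⁻¹ := by
          field_simp
        exact le_of_eq heq.symm
    _ ≤ _ := mul_le_mul_right h1 _

/-- **From ultracontractivity to convergence of negative moments**: if
`a : ι → [0,∞)`, `λ : ι → [1,∞)` and `γ > 0` satisfy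
`sup_{0 < t ≤ 1} t^γ ∑' a i · exp(-t λ i) < ∞`, then for every natural `m > γ`
the sum `∑' a i · (λ i)^{-m}` is finite. -/
theorem moments_of_ultracontractivity {ι : Type*} [Countable ι]
    (a : ι → ℝ≥0) (l : ι → ℝ) (hl : ∀ i, 1 ≤ l i) (γ : ℝ) (hγ : 0 < γ)
    (C : ℝ)
    (hC : ∀ t : ℝ, 0 < t → t ≤ 1 →
      ENNReal.ofReal (t ^ γ) * (∑' i : ι, (a i : ℝ≥0∞) * ENNReal.ofReal (Real.exp (-t * l i)))
        ≤ ENNReal.ofReal C) :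
    ∀ m : ℕ, γ < (m : ℝ) →
      (∑' i : ι, (a i : ℝ≥0∞) * ENNReal.ofReal ((l i ^ m)⁻¹)) ≠ ∞ := by
  intro m hm
  have hm0 : (0:ℝ) < m := lt_trans hγ hm
  have hm1 : 1 ≤ m := Nat.cast_pos.mp hm0
  set E : ℝ≥0∞ := ENNReal.ofReal (m * Real.exp 1) with hE
  have hEtop : E ≠ ∞ := ENNReal.ofReal_ne_top
  -- step 1 + rearrange
  have step1 : (∑' i : ι, (a i : ℝ≥0∞) * ENNReal.ofReal ((l i ^ m)⁻¹)) ≤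
      E * ∑' i : ι, ∫⁻ t in Set.Ioc (0:ℝ) 1,
        (a i : ℝ≥0∞) * ENNReal.ofReal (t ^ (m-1) * Real.exp (-t * l i)) := by
    rw [← ENNReal.tsum_mul_left]
    refine ENNReal.tsum_le_tsum fun i => ?_
    calc (a i : ℝ≥0∞) * ENNReal.ofReal ((l i ^ m)⁻¹)
        ≤ (a i : ℝ≥0∞) * (E * ∫⁻ t in Set.Ioc (0:ℝ) 1,
            ENNReal.ofReal (t ^ (m-1) * Real.exp (-t * l i))) :=
          mul_le_mul_right (moments_aux m hm1 (hl i)) _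
      _ = E * ∫⁻ t in Set.Ioc (0:ℝ) 1,
            (a i : ℝ≥0∞) * ENNReal.ofReal (t ^ (m-1) * Real.exp (-t * l i)) := by
          rw [lintegral_const_mul' _ _ ENNReal.coe_ne_top, ← mul_assoc, ← mul_assoc,
            mul_comm (a i : ℝ≥0∞) E]
  -- swap sum and integral
  have hmeas : ∀ i : ι, AEMeasurable
      (fun t : ℝ => (a i : ℝ≥0∞) * ENNReal.ofReal (t ^ (m-1) * Real.exp (-t * l i)))
      (volume.restrict (Set.Ioc (0:ℝ) 1)) := by
    intro i; apply AEMeasurable.const_mul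
    apply ENNReal.measurable_ofReal.comp_aemeasurable
    exact ((continuous_pow (m-1)).mul (Real.continuous_exp.comp
      (by continuity))).aemeasurable
  have step2 : (∑' i : ι, ∫⁻ t in Set.Ioc (0:ℝ) 1,
        (a i : ℝ≥0∞) * ENNReal.ofReal (t ^ (m-1) * Real.exp (-t * l i)))
      = ∫⁻ t in Set.Ioc (0:ℝ) 1, ∑' i : ι,
        (a i : ℝ≥0∞) * ENNReal.ofReal (t ^ (m-1) * Real.exp (-t * l i)) :=
    (lintegral_tsum hmeas).symm
  -- pointwise bound for the integrand
  have step3 : ∫⁻ t in Set.Ioc (0:ℝ) 1, (∑' i : ι,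
        (a i : ℝ≥0∞) * ENNReal.ofReal (t ^ (m-1) * Real.exp (-t * l i)))
      ≤ ∫⁻ t in Set.Ioc (0:ℝ) 1,
        ENNReal.ofReal C * ENNReal.ofReal (t ^ (m-1) * (t ^ γ)⁻¹) := by
    refine lintegral_mono_ae ?_
    filter_upwards [ae_restrict_mem measurableSet_Ioc] with t ht
    obtain ⟨ht0, ht1⟩ := ht
    have htγ : 0 < t ^ γ := Real.rpow_pos_of_pos ht0 γ
    have key : (∑' i : ι, (a i : ℝ≥0∞) * ENNReal.ofReal (Real.exp (-t * l i)))
        ≤ ENNReal.ofReal C / ENNReal.ofReal (t ^ γ) := by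
      rw [ENNReal.le_div_iff_mul_le (Or.inl (by simp [htγ])) (Or.inl ENNReal.ofReal_ne_top)]
      rw [mul_comm]; exact hC t ht0 ht1
    calc (∑' i : ι, (a i : ℝ≥0∞) * ENNReal.ofReal (t ^ (m-1) * Real.exp (-t * l i)))
        = ENNReal.ofReal (t ^ (m-1)) *
            ∑' i : ι, (a i : ℝ≥0∞) * ENNReal.ofReal (Real.exp (-t * l i)) := by
          rw [← ENNReal.tsum_mul_left]
          congr 1; ext i
          rw [ENNReal.ofReal_mul (by positivity), ← mul_assoc, ← mul_assoc,
            mul_comm (a i : ℝ≥0∞) (ENNReal.ofReal (t ^ (m-1)))]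
      _ ≤ ENNReal.ofReal (t ^ (m-1)) * (ENNReal.ofReal C / ENNReal.ofReal (t ^ γ)) :=
          mul_le_mul_right key _
      _ = ENNReal.ofReal C * ENNReal.ofReal (t ^ (m-1) * (t ^ γ)⁻¹) := by
          rw [ENNReal.ofReal_mul (by positivity), ENNReal.ofReal_inv_of_pos htγ,
            ENNReal.div_eq_inv_mul]
          ring
  -- finiteness of the final integral
  have step4 : ∫⁻ t in Set.Ioc (0:ℝ) 1,
      ENNReal.ofReal C * ENNReal.ofReal (t ^ (m-1) * (t ^ γ)⁻¹) < ∞ := by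
    rw [lintegral_const_mul' _ _ ENNReal.ofReal_ne_top]
    refine ENNReal.mul_lt_top ENNReal.ofReal_lt_top ?_
    have hint : IntegrableOn (fun t : ℝ => t ^ (m-1) * (t ^ γ)⁻¹) (Set.Ioc 0 1) := by
      have h1 : IntegrableOn (fun t : ℝ => t ^ ((m:ℝ) - 1 - γ)) (Set.Ioo (0:ℝ) 1) :=
        (intervalIntegral.integrableOn_Ioo_rpow_iff one_pos).mpr (by linarith)
      have h2 : IntegrableOn (fun t : ℝ => t ^ ((m:ℝ) - 1 - γ)) (Set.Ioc (0:ℝ) 1) := by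
        rwa [IntegrableOn, Measure.restrict_congr_set MeasureTheory.Ioo_ae_eq_Ioc] at h1
      refine h2.congr_fun (fun t ht => ?_) measurableSet_Ioc
      have ht0 : 0 < t := ht.1
      dsimp only
      rw [show (m:ℝ) - 1 - γ = ((m-1:ℕ):ℝ) + (-γ) by push_cast [Nat.cast_sub hm1]; ring,
        Real.rpow_add ht0, Real.rpow_natCast, Real.rpow_neg ht0.le]
    exact hint.lintegral_lt_top
  intro habs
  have hfin : (∑' i : ι, (a i : ℝ≥0∞) * ENNReal.ofReal ((l i ^ m)⁻¹)) < ⊤ := by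
    refine lt_of_le_of_lt step1 ?_
    rw [step2]
    exact ENNReal.mul_lt_top hEtop.lt_top (lt_of_le_of_lt step3 step4)
  rw [habs] at hfin
  exact lt_irrefl _ hfin
end

section
/- Let ι be a countable type, a : ι → [0, ∞), λ : ι → [1, ∞), and let δ, C be reals with 0 < δ < 1 and t^δ · ∑'_{i ∈ ι} a(i) · exp(−t · λ(i)) ≤ C for all t ∈ (0, 1]. Then ∑'_{i ∈ ι} a(i) / λ(i) is finite; in fact ∑'_{i ∈ ι} a(i)·(1 − exp(−λ(i)))/λ(i) ≤ C/(1 − δ). -/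
open scoped ENNReal NNReal
open MeasureTheory Set

private lemma exp_integral_aux (c : ℝ) (hc : 1 ≤ c) :
    ∫⁻ x in Ioc (0:ℝ) 1, ENNReal.ofReal (Real.exp (-x * c)) =
      ENNReal.ofReal ((1 - Real.exp (-c)) / c) := by
  have hc0 : 0 < c := lt_of_lt_of_le one_pos hc
  have hcont : Continuous fun x : ℝ => Real.exp (-x * c) :=
    Real.continuous_exp.comp ((continuous_id.neg).mul continuous_const)
  rw [← ofReal_integral_eq_lintegral_ofReal (hcont.integrableOn_Ioc)
      (Filter.Eventually.of_forall fun x => (Real.exp_pos _).le)]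
  congr 1
  rw [← intervalIntegral.integral_of_le (by norm_num : (0:ℝ) ≤ 1)]
  have h1 : ∀ x : ℝ, Real.exp (-x * c) = Real.exp (-(c * x)) := by
    intro x; ring_nf
  simp_rw [h1]
  have h2 := intervalIntegral.mul_integral_comp_mul_left (a := (0:ℝ)) (b := 1)
    (f := fun y => Real.exp (-y)) (c := c)
  have h3 : (∫ y in (c*0)..(c*1), Real.exp (-y)) = 1 - Real.exp (-c) := by
    rw [intervalIntegral.integral_comp_neg (f := fun y => Real.exp y)]
    rw [integral_exp]
    simp
  rw [h3] at h2
  field_simp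
  linarith [h2]

private lemma rpow_integral_aux (δ : ℝ) (hδ0 : 0 < δ) (hδ1 : δ < 1) (C : ℝ) (hC0 : 0 ≤ C) :
    ∫⁻ x in Ioc (0:ℝ) 1, ENNReal.ofReal (C * x ^ (-δ)) = ENNReal.ofReal (C / (1 - δ)) := by
  have hint : IntegrableOn (fun x : ℝ => C * x ^ (-δ)) (Ioc (0:ℝ) 1) := by
    have := (intervalIntegral.intervalIntegrable_rpow' (a := 0) (b := 1)
      (r := -δ) (by linarith)).const_mul C
    rwa [intervalIntegrable_iff_integrableOn_Ioc_of_le (by norm_num : (0:ℝ) ≤ 1)] at this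
  rw [← ofReal_integral_eq_lintegral_ofReal hint ?_]
  · congr 1
    rw [← intervalIntegral.integral_of_le (by norm_num : (0:ℝ) ≤ 1)]
    rw [intervalIntegral.integral_const_mul]
    rw [integral_rpow (Or.inl (by linarith))]
    rw [Real.one_rpow, Real.zero_rpow (by linarith)]
    field_simp
    ring_nf
  · filter_upwards [ae_restrict_mem measurableSet_Ioc] with x hx
    exact mul_nonneg hC0 (Real.rpow_nonneg hx.1.le _)

/-- **Terminal step of the integration argument**: if `a : ι → [0,∞)`,
`λ : ι → [1,∞)`, `0 < δ < 1` and `t^δ ∑' a i exp(-t λ i) ≤ C` for all `t ∈ (0,1]`,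
then `∑' a i / λ i` is finite; in fact
`∑' a i (1 - exp(-λ i)) / λ i ≤ C / (1 - δ)`. -/
theorem integration_terminal_step {ι : Type*} [Countable ι]
    (a : ι → ℝ≥0) (l : ι → ℝ) (hl : ∀ i, 1 ≤ l i)
    (δ C : ℝ) (hδ0 : 0 < δ) (hδ1 : δ < 1)
    (hC : ∀ t : ℝ, 0 < t → t ≤ 1 →
      ENNReal.ofReal (t ^ δ) * (∑' i : ι, (a i : ℝ≥0∞) * ENNReal.ofReal (Real.exp (-t * l i)))
        ≤ ENNReal.ofReal C) :
    (∑' i : ι, (a i : ℝ≥0∞) * ENNReal.ofReal (l i)⁻¹) ≠ ∞ ∧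
    (∑' i : ι, (a i : ℝ≥0∞) * ENNReal.ofReal ((1 - Real.exp (-l i)) / l i))
      ≤ ENNReal.ofReal (C / (1 - δ)) := by
  by_cases hC0 : C < 0
  · -- then a = 0
    have h1 := hC 1 one_pos le_rfl
    rw [ENNReal.ofReal_eq_zero.2 hC0.le, Real.one_rpow, ENNReal.ofReal_one, one_mul] at h1
    have hsum0 : (∑' i : ι, (a i : ℝ≥0∞) * ENNReal.ofReal (Real.exp (-1 * l i))) = 0 :=
      le_antisymm h1 zero_le
    have ha : ∀ i, a i = 0 := by
      intro i
      have hterm := (ENNReal.tsum_eq_zero.1 hsum0) i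
      rcases mul_eq_zero.1 hterm with h | h
      · exact_mod_cast h
      · exact absurd h (by positivity)
    simp only [ha]
    simp
  · push_neg at hC0
    -- measurability of each summand
    have hmeas : ∀ i : ι, Measurable fun x : ℝ =>
        (a i : ℝ≥0∞) * ENNReal.ofReal (Real.exp (-x * l i)) := fun i =>
      measurable_const.mul (ENNReal.measurable_ofReal.comp
        (Real.measurable_exp.comp (measurable_id.neg.mul_const _)))
    -- swap sum and integral
    have hswap : (∑' i : ι, (a i : ℝ≥0∞) * ENNReal.ofReal ((1 - Real.exp (-l i)) / l i))
        = ∫⁻ x in Ioc (0:ℝ) 1,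
            ∑' i : ι, (a i : ℝ≥0∞) * ENNReal.ofReal (Real.exp (-x * l i)) := by
      rw [lintegral_tsum fun i => (hmeas i).aemeasurable]
      congr 1
      ext i
      rw [lintegral_const_mul' _ _ ENNReal.coe_ne_top]
      rw [exp_integral_aux (l i) (hl i)]
    -- pointwise bound and integrate
    have hbound : ∫⁻ x in Ioc (0:ℝ) 1,
        (∑' i : ι, (a i : ℝ≥0∞) * ENNReal.ofReal (Real.exp (-x * l i)))
        ≤ ENNReal.ofReal (C / (1 - δ)) := by
      rw [← rpow_integral_aux δ hδ0 hδ1 C hC0]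
      refine setLIntegral_mono' measurableSet_Ioc fun x hx => ?_
      have hx0 : 0 < x := hx.1
      have hxd : 0 < x ^ δ := Real.rpow_pos_of_pos hx0 _
      have h := hC x hx0 hx.2
      have hne : ENNReal.ofReal (x ^ δ) ≠ 0 := by
        simp [ENNReal.ofReal_eq_zero, not_le, hxd]
      calc (∑' i : ι, (a i : ℝ≥0∞) * ENNReal.ofReal (Real.exp (-x * l i)))
          ≤ ENNReal.ofReal C / ENNReal.ofReal (x ^ δ) := by
            rw [ENNReal.le_div_iff_mul_le (Or.inl hne) (Or.inl ENNReal.ofReal_ne_top)]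
            rw [mul_comm]; exact h
        _ = ENNReal.ofReal (C * x ^ (-δ)) := by
            rw [← ENNReal.ofReal_div_of_pos hxd]
            rw [Real.rpow_neg hx0.le, div_eq_mul_inv]
    have hmain : (∑' i : ι, (a i : ℝ≥0∞) * ENNReal.ofReal ((1 - Real.exp (-l i)) / l i))
        ≤ ENNReal.ofReal (C / (1 - δ)) := hswap ▸ hbound
    refine ⟨?_, hmain⟩
    -- first part: comparison
    have hcmp : ∀ i : ι, (a i : ℝ≥0∞) * ENNReal.ofReal (l i)⁻¹ ≤
        ENNReal.ofReal (1 - Real.exp (-1))⁻¹ *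
          ((a i : ℝ≥0∞) * ENNReal.ofReal ((1 - Real.exp (-l i)) / l i)) := by
      intro i
      have hli : 0 < l i := lt_of_lt_of_le one_pos (hl i)
      have he1 : Real.exp (-1) < 1 := by
        rw [Real.exp_lt_one_iff]; norm_num
      have he2 : Real.exp (-l i) ≤ Real.exp (-1) := Real.exp_le_exp.2 (by linarith [hl i])
      have hreal : (l i)⁻¹ ≤ (1 - Real.exp (-1))⁻¹ * ((1 - Real.exp (-l i)) / l i) := by
        rw [div_eq_mul_inv, ← mul_assoc]
        have h1 : (1:ℝ) ≤ (1 - Real.exp (-1))⁻¹ * (1 - Real.exp (-l i)) := by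
          rw [← div_eq_inv_mul, le_div_iff₀ (by linarith)]
          rw [one_mul]; linarith
        nlinarith [inv_nonneg.2 hli.le]
      calc (a i : ℝ≥0∞) * ENNReal.ofReal (l i)⁻¹
          ≤ (a i : ℝ≥0∞) * ENNReal.ofReal ((1 - Real.exp (-1))⁻¹ *
              ((1 - Real.exp (-l i)) / l i)) := by
            exact mul_le_mul_right (ENNReal.ofReal_le_ofReal hreal) _
        _ = ENNReal.ofReal (1 - Real.exp (-1))⁻¹ *
              ((a i : ℝ≥0∞) * ENNReal.ofReal ((1 - Real.exp (-l i)) / l i)) := by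
            rw [ENNReal.ofReal_mul (inv_nonneg.2 (by linarith))]
            ring
    have : (∑' i : ι, (a i : ℝ≥0∞) * ENNReal.ofReal (l i)⁻¹) ≤
        ENNReal.ofReal (1 - Real.exp (-1))⁻¹ * ENNReal.ofReal (C / (1 - δ)) := by
      calc (∑' i : ι, (a i : ℝ≥0∞) * ENNReal.ofReal (l i)⁻¹)
          ≤ ∑' i : ι, ENNReal.ofReal (1 - Real.exp (-1))⁻¹ *
              ((a i : ℝ≥0∞) * ENNReal.ofReal ((1 - Real.exp (-l i)) / l i)) :=
            ENNReal.tsum_le_tsum hcmp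
        _ = ENNReal.ofReal (1 - Real.exp (-1))⁻¹ *
              ∑' i : ι, (a i : ℝ≥0∞) * ENNReal.ofReal ((1 - Real.exp (-l i)) / l i) :=
            ENNReal.tsum_mul_left
        _ ≤ _ := mul_le_mul_right hmain _
    exact ne_top_of_le_ne_top (ENNReal.mul_ne_top ENNReal.ofReal_ne_top
      ENNReal.ofReal_ne_top) this
end

section
/- Let ι be a countable type, a : ι → [0, ∞), λ : ι → [1, ∞), and let δ, C be reals with δ > 1 and t^δ · ∑'_{i ∈ ι} a(i) · exp(−t · λ(i)) ≤ C for all t ∈ (0, 1]. Then sup_{0 < t ≤ 1} t^{δ−1} · ∑'_{i ∈ ι} a(i) · (λ(i))^{−1} · exp(−t · λ(i)) < ∞; in fact this supremum is at most C/(δ−1) + C. -/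
open scoped ENNReal NNReal

/-- **Inductive step of the integration argument**: if `a : ι → [0,∞)`,
`λ : ι → [1,∞)`, `δ > 1` and `t^δ ∑' a i exp(-t λ i) ≤ C` for all `t ∈ (0,1]`, then
`sup_{0 < t ≤ 1} t^{δ-1} ∑' a i (λ i)⁻¹ exp(-t λ i)` is finite; in fact it is at
most `C/(δ-1) + C`. -/
theorem integration_inductive_step {ι : Type*} [Countable ι]
    (a : ι → ℝ≥0) (l : ι → ℝ) (hl : ∀ i, 1 ≤ l i)
    (δ C : ℝ) (hδ : 1 < δ)
    (hC : ∀ t : ℝ, 0 < t → t ≤ 1 →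
      ENNReal.ofReal (t ^ δ) * (∑' i : ι, (a i : ℝ≥0∞) * ENNReal.ofReal (Real.exp (-t * l i)))
        ≤ ENNReal.ofReal C) :
    ∀ t : ℝ, 0 < t → t ≤ 1 →
      ENNReal.ofReal (t ^ (δ - 1)) *
          (∑' i : ι, (a i : ℝ≥0∞) * ENNReal.ofReal ((l i)⁻¹ * Real.exp (-t * l i)))
        ≤ ENNReal.ofReal (C / (δ - 1) + C) := by
  intro t ht ht1
  have hδ1 : (0:ℝ) < δ - 1 := by linarith
  rcases le_or_gt C 0 with hC0 | hCpos
  · -- degenerate case: the sums are all zero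
    have h := hC t ht ht1
    have hCz : ENNReal.ofReal C = 0 := ENNReal.ofReal_eq_zero.2 hC0
    rw [hCz, le_zero_iff] at h
    have hne : ENNReal.ofReal (t ^ δ) ≠ 0 := by
      simp [ENNReal.ofReal_eq_zero, not_le, Real.rpow_pos_of_pos ht]
    have hsum : (∑' i : ι, (a i : ℝ≥0∞) * ENNReal.ofReal (Real.exp (-t * l i))) = 0 :=
      (mul_eq_zero.mp h).resolve_left hne
    have ha : ∀ i, (a i : ℝ≥0∞) = 0 := by
      intro i
      have h0 := ENNReal.tsum_eq_zero.mp hsum i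
      rcases mul_eq_zero.mp h0 with h' | h'
      · exact h'
      · exact absurd h' (by simp [ENNReal.ofReal_eq_zero, not_le, Real.exp_pos])
    simp only [ha, zero_mul, tsum_zero, mul_zero]
    exact zero_le
  · -- main case: 0 < C
    -- Step 1: the pointwise identity
    have key : ∀ i, ENNReal.ofReal ((l i)⁻¹ * Real.exp (-t * l i)) =
        ENNReal.ofReal ((l i)⁻¹ * Real.exp (-1 * l i)) +
        ∫⁻ x in Set.Ioc t 1, ENNReal.ofReal (Real.exp (-x * l i)) := by
      intro i
      set L := l i with hLdef
      have hL : 1 ≤ L := hl i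
      have hL0 : (0:ℝ) < L := lt_of_lt_of_le one_pos hL
      have hderiv : ∀ x ∈ Set.uIcc t 1,
          HasDerivAt (fun x => -L⁻¹ * Real.exp (-x * L)) (Real.exp (-x * L)) x := by
        intro x _
        have h1 : HasDerivAt (fun x : ℝ => -x * L) (-L) x := by
          simpa using ((hasDerivAt_id x).neg.mul_const L)
        have h2 : HasDerivAt (fun x : ℝ => Real.exp (-x * L)) (Real.exp (-x * L) * (-L)) x :=
          h1.exp
        have h3 := h2.const_mul (-L⁻¹)
        exact h3.congr_deriv (by
          rw [mul_comm (Real.exp _) (-L), ← mul_assoc, neg_mul_neg, inv_mul_cancel₀ hL0.ne', one_mul])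
      have hcont : Continuous fun x : ℝ => Real.exp (-x * L) := by continuity
      have hint : ∫ x in t..1, Real.exp (-x * L) =
          (-L⁻¹ * Real.exp (-1 * L)) - (-L⁻¹ * Real.exp (-t * L)) := by
        have := intervalIntegral.integral_eq_sub_of_hasDerivAt hderiv
          (hcont.intervalIntegrable t 1)
        simpa using this
      have h3 : ENNReal.ofReal (∫ x in t..1, Real.exp (-x * L)) =
          ∫⁻ x in Set.Ioc t 1, ENNReal.ofReal (Real.exp (-x * L)) := by
        rw [intervalIntegral.integral_of_le ht1]
        rw [MeasureTheory.ofReal_integral_eq_lintegral_ofReal]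
        · exact (hcont.integrableOn_Icc).mono_set Set.Ioc_subset_Icc_self
        · exact Filter.Eventually.of_forall fun x => (Real.exp_pos _).le
      rw [← h3, ← ENNReal.ofReal_add (by positivity) (by
        rw [hint]
        nlinarith [Real.exp_le_exp.2 (show -1 * L ≤ -t * L by nlinarith), inv_pos.2 hL0])]
      congr 1
      rw [hint]
      ring
    -- Step 2: split the sum
    have hmeas : ∀ i : ι, Measurable fun x : ℝ =>
        (a i : ℝ≥0∞) * ENNReal.ofReal (Real.exp (-x * l i)) := by
      intro i
      exact (measurable_const.mul ((by continuity : Continuous fun x : ℝ =>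
        Real.exp (-x * l i)).measurable.ennreal_ofReal))
    have hsum_eq : (∑' i : ι, (a i : ℝ≥0∞) * ENNReal.ofReal ((l i)⁻¹ * Real.exp (-t * l i)))
        = (∑' i : ι, (a i : ℝ≥0∞) * ENNReal.ofReal ((l i)⁻¹ * Real.exp (-1 * l i)))
          + ∫⁻ x in Set.Ioc t 1,
              ∑' i : ι, (a i : ℝ≥0∞) * ENNReal.ofReal (Real.exp (-x * l i)) := by
      simp_rw [key, mul_add]
      rw [ENNReal.tsum_add]
      congr 1
      rw [MeasureTheory.lintegral_tsum fun i => (hmeas i).aemeasurable]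
      congr 1
      ext i
      rw [MeasureTheory.lintegral_const_mul' _ _ ENNReal.coe_ne_top]
    -- Step 3: bound the boundary term
    have hT1 : (∑' i : ι, (a i : ℝ≥0∞) * ENNReal.ofReal ((l i)⁻¹ * Real.exp (-1 * l i)))
        ≤ ENNReal.ofReal C := by
      calc (∑' i : ι, (a i : ℝ≥0∞) * ENNReal.ofReal ((l i)⁻¹ * Real.exp (-1 * l i)))
          ≤ ∑' i : ι, (a i : ℝ≥0∞) * ENNReal.ofReal (Real.exp (-1 * l i)) := by
            refine ENNReal.tsum_le_tsum fun i => ?_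
            refine mul_le_mul_right (ENNReal.ofReal_le_ofReal ?_) _
            have hL0 : (0:ℝ) < l i := lt_of_lt_of_le one_pos (hl i)
            have h1 : (l i)⁻¹ ≤ 1 := inv_le_one_of_one_le₀ (hl i)
            nlinarith [Real.exp_pos (-1 * l i)]
        _ ≤ ENNReal.ofReal C := by
            have h := hC 1 one_pos le_rfl
            simpa [Real.one_rpow] using h
    -- Step 4: bound the integral term
    have hIbound : (∫⁻ x in Set.Ioc t 1,
          ∑' i : ι, (a i : ℝ≥0∞) * ENNReal.ofReal (Real.exp (-x * l i)))
        ≤ ENNReal.ofReal (C / (δ - 1) * t ^ (1 - δ)) := by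
      have step1 : (∫⁻ x in Set.Ioc t 1,
            ∑' i : ι, (a i : ℝ≥0∞) * ENNReal.ofReal (Real.exp (-x * l i)))
          ≤ ∫⁻ x in Set.Ioc t 1, ENNReal.ofReal (C * x ^ (-δ)) := by
        refine MeasureTheory.setLIntegral_mono (by fun_prop) fun x hx => ?_
        have hx0 : 0 < x := lt_trans ht hx.1
        have hxδ : 0 < x ^ δ := Real.rpow_pos_of_pos hx0 δ
        have h := hC x hx0 hx.2
        have hle : (∑' i : ι, (a i : ℝ≥0∞) * ENNReal.ofReal (Real.exp (-x * l i)))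
            ≤ ENNReal.ofReal C / ENNReal.ofReal (x ^ δ) := by
          rw [ENNReal.le_div_iff_mul_le (Or.inl (by simp [ENNReal.ofReal_eq_zero, not_le, hxδ]))
            (Or.inl ENNReal.ofReal_ne_top)]
          rw [mul_comm]; exact h
        refine hle.trans (le_of_eq ?_)
        rw [← ENNReal.ofReal_div_of_pos hxδ]
        congr 1
        rw [Real.rpow_neg hx0.le, div_eq_mul_inv]
      refine step1.trans ?_
      have hcont : ContinuousOn (fun x : ℝ => C * x ^ (-δ)) (Set.Icc t 1) :=
        continuousOn_const.mul ((continuousOn_id).rpow_const fun x hx =>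
          Or.inl (ne_of_gt (lt_of_lt_of_le ht hx.1)))
      have hintg : MeasureTheory.IntegrableOn (fun x : ℝ => C * x ^ (-δ)) (Set.Ioc t 1) :=
        (hcont.integrableOn_Icc).mono_set Set.Ioc_subset_Icc_self
      have heq : (∫⁻ x in Set.Ioc t 1, ENNReal.ofReal (C * x ^ (-δ)))
          = ENNReal.ofReal (∫ x in t..1, C * x ^ (-δ)) := by
        rw [intervalIntegral.integral_of_le ht1,
          MeasureTheory.ofReal_integral_eq_lintegral_ofReal hintg]
        exact (MeasureTheory.ae_restrict_iff' measurableSet_Ioc).2 <|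
          Filter.Eventually.of_forall fun x hx =>
            mul_nonneg hCpos.le (Real.rpow_nonneg (le_of_lt (ht.trans hx.1)) _)
      have hval : ∫ x in t..1, C * x ^ (-δ) = C * ((t ^ (1 - δ) - 1) / (δ - 1)) := by
        rw [intervalIntegral.integral_const_mul,
          integral_rpow (Or.inr ⟨by linarith, fun h => by
            simp [Set.uIcc_of_le ht1] at h; linarith⟩)]
        rw [Real.one_rpow, show (-δ + 1) = (1 - δ) by ring]
        have h1 : (1 - δ) ≠ 0 := by linarith
        have h2 : δ - 1 ≠ 0 := by linarith
        field_simp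
        ring
      rw [heq, hval]
      apply ENNReal.ofReal_le_ofReal
      rw [div_mul_eq_mul_div, mul_div_assoc]
      gcongr; nlinarith [Real.rpow_nonneg ht.le (1-δ)]
    -- Step 5: conclude
    have htpow1 : ENNReal.ofReal (t ^ (δ - 1)) ≤ 1 := by
      rw [← ENNReal.ofReal_one]
      exact ENNReal.ofReal_le_ofReal (Real.rpow_le_one ht.le ht1 (by linarith))
    calc ENNReal.ofReal (t ^ (δ - 1)) *
            (∑' i : ι, (a i : ℝ≥0∞) * ENNReal.ofReal ((l i)⁻¹ * Real.exp (-t * l i)))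
        = ENNReal.ofReal (t ^ (δ - 1)) *
            ((∑' i : ι, (a i : ℝ≥0∞) * ENNReal.ofReal ((l i)⁻¹ * Real.exp (-1 * l i)))
              + ∫⁻ x in Set.Ioc t 1,
                  ∑' i : ι, (a i : ℝ≥0∞) * ENNReal.ofReal (Real.exp (-x * l i))) := by
          rw [hsum_eq]
      _ ≤ 1 * ENNReal.ofReal C
          + ENNReal.ofReal (t ^ (δ - 1)) * ENNReal.ofReal (C / (δ - 1) * t ^ (1 - δ)) := by
          rw [mul_add]
          exact add_le_add (mul_le_mul' htpow1 hT1) (mul_le_mul_right hIbound _)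
      _ = ENNReal.ofReal (C / (δ - 1) + C) := by
          rw [one_mul, ← ENNReal.ofReal_mul (Real.rpow_nonneg ht.le _)]
          have : t ^ (δ - 1) * (C / (δ - 1) * t ^ (1 - δ)) = C / (δ - 1) := by
            have h1 : t ^ (δ - 1) * t ^ (1 - δ) = 1 := by
              rw [← Real.rpow_add ht]
              norm_num
            calc t ^ (δ - 1) * (C / (δ - 1) * t ^ (1 - δ))
                = (t ^ (δ - 1) * t ^ (1 - δ)) * (C / (δ - 1)) := by ring
              _ = C / (δ - 1) := by rw [h1, one_mul]
          rw [this, show C / (δ - 1) + C = C + C / (δ - 1) by ring,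
            ← ENNReal.ofReal_add hCpos.le (le_of_lt (div_pos hCpos hδ1))]
end

section
/- Let X be a countable type, ℓ : X → ℕ, k a positive natural number, and c₁, c₂ > 0 constants such that for every n ∈ ℕ the set {x ∈ X : ℓ(x) ≤ n} is finite and c₁ · (1 + n)^k ≤ #{x ∈ X : ℓ(x) ≤ n} ≤ c₂ · (1 + n)^k. Then, for a real number s, the sum ∑'_{x ∈ X} (1 + ℓ(x))^{−s} is finite if and only if s > k. -/
open scoped ENNReal NNReal

lemma aux_tsum_fiber {X : Type*} (φ : X → ℕ) (f : X → ℝ≥0∞) :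
    ∑' x, f x = ∑' j : ℕ, ∑' x : {x // φ x = j}, f x.1 := by
  rw [← (Equiv.sigmaFiberEquiv φ).tsum_eq f, ENNReal.tsum_sigma']
  rfl

lemma aux_tsum_le_card_mul {X : Type*} {s : Set X} (hs : s.Finite) (f : X → ℝ≥0∞) (C : ℝ≥0∞)
    (h : ∀ x ∈ s, f x ≤ C) : ∑' x : s, f x.1 ≤ hs.toFinset.card * C := by
  classical
  haveI := hs.fintype
  rw [tsum_fintype]
  calc ∑ x : s, f x.1 ≤ Finset.univ.card • C :=
        Finset.sum_le_card_nsmul _ _ _ (fun x _ => h x.1 x.2)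
    _ = hs.toFinset.card * C := by
        rw [Finset.card_univ, ← hs.card_toFinset, nsmul_eq_mul]

lemma aux_card_mul_le_tsum {X : Type*} {s : Set X} (hs : s.Finite) (f : X → ℝ≥0∞) (C : ℝ≥0∞)
    (h : ∀ x ∈ s, C ≤ f x) : (hs.toFinset.card : ℝ≥0∞) * C ≤ ∑' x : s, f x.1 := by
  classical
  haveI := hs.fintype
  rw [tsum_fintype]
  calc (hs.toFinset.card : ℝ≥0∞) * C = Finset.univ.card • C := by
        rw [Finset.card_univ, ← hs.card_toFinset, nsmul_eq_mul]
    _ ≤ ∑ x : s, f x.1 := Finset.card_nsmul_le_sum _ _ _ (fun x _ => h x.1 x.2)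


lemma aux_conv {X : Type*}
    (ℓ : X → ℕ) (k : ℕ) (hk : 0 < k) (c₂ : ℝ) (hc₂ : 0 < c₂)
    (hfin : ∀ n : ℕ, {x : X | ℓ x ≤ n}.Finite)
    (hupp : ∀ n : ℕ, ((hfin n).toFinset.card : ℝ) ≤ c₂ * (1 + (n : ℝ)) ^ k)
    (s : ℝ) (hs : (k : ℝ) < s) :
    (∑' x : X, ENNReal.ofReal ((1 + (ℓ x : ℝ)) ^ (-s))) ≠ ∞ := by
  have hs0 : 0 < s := lt_of_le_of_lt (by exact_mod_cast Nat.cast_nonneg k) hs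
  set f : X → ℝ≥0∞ := fun x => ENNReal.ofReal ((1 + (ℓ x : ℝ)) ^ (-s)) with hf
  set r : ℝ≥0∞ := ENNReal.ofReal ((2:ℝ) ^ ((k:ℝ) - s)) with hr
  have hr1 : r < 1 := by
    rw [hr, ← ENNReal.ofReal_one]
    exact ENNReal.ofReal_lt_ofReal_iff_of_nonneg (by positivity) |>.2
      (Real.rpow_lt_one_of_one_lt_of_neg one_lt_two (by linarith))
  rw [aux_tsum_fiber (fun x => Nat.log 2 (1 + ℓ x)) f]
  have key : ∀ j : ℕ, (∑' x : {x | Nat.log 2 (1 + ℓ x) = j}, f x.1)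
      ≤ ENNReal.ofReal (c₂ * 2 ^ k) * r ^ j := by
    intro j
    have hsub : {x : X | Nat.log 2 (1 + ℓ x) = j} ⊆ {x : X | ℓ x ≤ 2 ^ (j+1) - 2} := by
      intro x hx
      have h1 : 1 + ℓ x < 2 ^ (j+1) := by
        have := Nat.lt_pow_succ_log_self (b := 2) one_lt_two (1 + ℓ x)
        rwa [hx] at this
      have h2 : (2:ℕ) ≤ 2 ^ (j+1) := Nat.le_self_pow (Nat.succ_ne_zero j) 2 |>.trans_eq rfl
      simp only [Set.mem_setOf_eq]; omega
    have hFj : {x : X | Nat.log 2 (1 + ℓ x) = j}.Finite := (hfin _).subset hsub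
    have hcard : (hFj.toFinset.card : ℝ≥0∞) ≤ ((hfin (2 ^ (j+1) - 2)).toFinset.card : ℝ≥0∞) := by
      norm_cast
      exact Finset.card_le_card (by
        intro x hx
        rw [Set.Finite.mem_toFinset] at *
        exact hsub hx)
    have hterm : ∀ x ∈ {x : X | Nat.log 2 (1 + ℓ x) = j},
        f x ≤ ENNReal.ofReal (((2:ℝ) ^ j) ^ (-s)) := by
      intro x hx
      apply ENNReal.ofReal_le_ofReal
      apply Real.rpow_le_rpow_of_nonpos (by positivity) _ (by linarith)
      have : (2:ℕ) ^ j ≤ 1 + ℓ x := by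
        have := Nat.pow_log_le_self 2 (x := 1 + ℓ x) (by omega)
        rwa [hx] at this
      exact_mod_cast this
    calc (∑' x : {x | Nat.log 2 (1 + ℓ x) = j}, f x.1)
        ≤ hFj.toFinset.card * ENNReal.ofReal (((2:ℝ) ^ j) ^ (-s)) :=
          aux_tsum_le_card_mul hFj f _ hterm
      _ ≤ ((hfin (2 ^ (j+1) - 2)).toFinset.card : ℝ≥0∞)
            * ENNReal.ofReal (((2:ℝ) ^ j) ^ (-s)) := by
          exact mul_le_mul_left hcard _
      _ ≤ ENNReal.ofReal (c₂ * (1 + ((2 ^ (j+1) - 2 : ℕ) : ℝ)) ^ k)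
            * ENNReal.ofReal (((2:ℝ) ^ j) ^ (-s)) := by
          apply mul_le_mul_left
          rw [← ENNReal.ofReal_natCast]
          exact ENNReal.ofReal_le_ofReal (hupp _)
      _ ≤ ENNReal.ofReal (c₂ * 2 ^ k) * r ^ j := by
          rw [← ENNReal.ofReal_pow (by positivity), ← ENNReal.ofReal_mul (by positivity),
            ← ENNReal.ofReal_mul (by positivity)]
          apply ENNReal.ofReal_le_ofReal
          have hbase : (1 + ((2 ^ (j+1) - 2 : ℕ) : ℝ)) ≤ (2:ℝ) ^ (j+1) := by
            have : (1 + (2 ^ (j+1) - 2 : ℕ) : ℕ) ≤ 2 ^ (j+1) := by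
              have : (2:ℕ) ≤ 2 ^ (j+1) := Nat.le_self_pow (Nat.succ_ne_zero j) 2
              omega
            calc (1 + ((2 ^ (j+1) - 2 : ℕ) : ℝ)) = ((1 + (2 ^ (j+1) - 2 : ℕ) : ℕ) : ℝ) := by
                  push_cast; ring
              _ ≤ ((2 ^ (j+1) : ℕ) : ℝ) := by exact_mod_cast this
              _ = (2:ℝ) ^ (j+1) := by push_cast; ring
          have h1 : c₂ * (1 + ((2 ^ (j+1) - 2 : ℕ) : ℝ)) ^ k * ((2:ℝ) ^ j) ^ (-s)
              ≤ c₂ * ((2:ℝ) ^ (j+1)) ^ k * ((2:ℝ) ^ j) ^ (-s) := by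
            apply mul_le_mul_of_nonneg_right _ (by positivity)
            apply mul_le_mul_of_nonneg_left _ hc₂.le
            exact pow_le_pow_left₀ (by positivity) hbase k
          refine h1.trans_eq ?_
          rw [← pow_mul, ← Real.rpow_natCast (2:ℝ) ((j+1)*k), ← Real.rpow_natCast (2:ℝ) j,
            ← Real.rpow_natCast (2:ℝ) k, ← Real.rpow_mul (by norm_num),
            ← Real.rpow_natCast ((2:ℝ) ^ ((k:ℝ) - s)) j, ← Real.rpow_mul (by norm_num),
            mul_assoc, ← Real.rpow_add two_pos, mul_assoc, ← Real.rpow_add two_pos]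
          congr 1
          push_cast
          ring
  refine ne_top_of_le_ne_top ?_ (ENNReal.tsum_le_tsum key)
  rw [ENNReal.tsum_mul_left, ENNReal.tsum_geometric]
  exact ENNReal.mul_ne_top ENNReal.ofReal_ne_top
    (ENNReal.inv_ne_top.2 (by simp [tsub_eq_zero_iff_le, hr1.not_ge]))

set_option maxHeartbeats 1000000 in
lemma aux_div {X : Type*}
    (ℓ : X → ℕ) (k : ℕ) (hk : 0 < k) (c₁ c₂ : ℝ) (hc₁ : 0 < c₁) (hc₂ : 0 < c₂)
    (hfin : ∀ n : ℕ, {x : X | ℓ x ≤ n}.Finite)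
    (hlow : ∀ n : ℕ, c₁ * (1 + (n : ℝ)) ^ k ≤ ((hfin n).toFinset.card : ℝ))
    (hupp : ∀ n : ℕ, ((hfin n).toFinset.card : ℝ) ≤ c₂ * (1 + (n : ℝ)) ^ k)
    (s : ℝ) (hs : s ≤ (k : ℝ)) (hs0 : 0 < s) :
    (∑' x : X, ENNReal.ofReal ((1 + (ℓ x : ℝ)) ^ (-s))) = ∞ := by
  classical
  set f : X → ℝ≥0∞ := fun x => ENNReal.ofReal ((1 + (ℓ x : ℝ)) ^ (-s)) with hf
  -- choose J₀
  obtain ⟨m₀, hm₀⟩ := exists_nat_gt ((c₂ + 1) / c₁)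
  have hkey : c₂ + 1 ≤ c₁ * (2:ℝ) ^ (m₀ * k) := by
    have h1 : c₂ + 1 < c₁ * m₀ := by
      rw [div_lt_iff₀ hc₁] at hm₀; linarith [hm₀]
    have h2 : (m₀ : ℝ) ≤ (2:ℝ) ^ (m₀ * k) := by
      have : m₀ ≤ 2 ^ (m₀ * k) := le_trans (Nat.lt_two_pow_self (n := m₀)).le
        (Nat.pow_le_pow_right (by norm_num) (Nat.le_mul_of_pos_right m₀ hk))
      exact_mod_cast this
    nlinarith
  set J₀ : ℕ := m₀ + 1 with hJ₀
  have hJ₀pos : 0 < J₀ := Nat.succ_pos m₀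
  set δ : ℝ≥0∞ := ENNReal.ofReal ((2:ℝ) ^ (-((J₀:ℝ) * s))) with hδ
  have hδpos : δ ≠ 0 := by
    rw [hδ]
    simp only [ne_eq, ENNReal.ofReal_eq_zero, not_le]
    positivity
  rw [aux_tsum_fiber (fun x => Nat.log 2 (1 + ℓ x) / J₀) f]
  have key : ∀ m : ℕ, δ ≤ ∑' x : {x | Nat.log 2 (1 + ℓ x) / J₀ = m + 1}, f x.1 := by
    intro m
    set m' : ℕ := m + 1 with hm'
    set A : ℕ := 2 ^ (m' * J₀) with hA
    set B : ℕ := 2 ^ ((m' + 1) * J₀) with hB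
    have hA2 : 2 ≤ A := by
      rw [hA]
      calc (2:ℕ) = 2 ^ 1 := rfl
        _ ≤ 2 ^ (m' * J₀) := Nat.pow_le_pow_right (by norm_num)
            (Nat.mul_pos (Nat.succ_pos m) hJ₀pos)
    have hAB : A ≤ B := Nat.pow_le_pow_right (by norm_num) (by nlinarith)
    have hEset : {x : X | Nat.log 2 (1 + ℓ x) / J₀ = m'}
        = {x : X | ℓ x ≤ B - 2} \ {x : X | ℓ x ≤ A - 2} := by
      ext x
      simp only [Set.mem_setOf_eq, Set.mem_diff, not_le]
      constructor
      · intro hx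
        have h1 : m' * J₀ ≤ Nat.log 2 (1 + ℓ x) := by
          exact (Nat.le_div_iff_mul_le hJ₀pos).1 (le_of_eq hx.symm)
        have h2 : Nat.log 2 (1 + ℓ x) < (m' + 1) * J₀ := by
          rw [Nat.lt_iff_add_one_le]
          by_contra hcon
          push_neg at hcon
          have : m' + 1 ≤ Nat.log 2 (1 + ℓ x) / J₀ := by
            rw [Nat.le_div_iff_mul_le hJ₀pos]; omega
          omega
        have hA' : A ≤ 1 + ℓ x := (Nat.le_log_iff_pow_le one_lt_two (by omega)).1 h1
        have hB' : 1 + ℓ x < B := (Nat.log_lt_iff_lt_pow one_lt_two (by omega)).1 h2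
        omega
      · rintro ⟨h1, h2⟩
        have hA' : A ≤ 1 + ℓ x := by omega
        have hB' : 1 + ℓ x < B := by omega
        have h1' : m' * J₀ ≤ Nat.log 2 (1 + ℓ x) :=
          (Nat.le_log_iff_pow_le one_lt_two (by omega)).2 hA'
        have h2' : Nat.log 2 (1 + ℓ x) < (m' + 1) * J₀ :=
          (Nat.log_lt_iff_lt_pow one_lt_two (by omega)).2 hB'
        have hle : m' ≤ Nat.log 2 (1 + ℓ x) / J₀ := Nat.le_div_iff_mul_le hJ₀pos |>.2 h1'
        have hlt : Nat.log 2 (1 + ℓ x) / J₀ < m' + 1 := Nat.div_lt_iff_lt_mul hJ₀pos |>.2 h2'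
        omega
    have hE : {x : X | Nat.log 2 (1 + ℓ x) / J₀ = m'}.Finite := by
      rw [hEset]; exact (hfin (B - 2)).subset Set.diff_subset
    -- card identity
    have hEfin : hE.toFinset = (hfin (B - 2)).toFinset \ (hfin (A - 2)).toFinset := by
      ext x
      simp only [Set.Finite.mem_toFinset, Finset.mem_sdiff, hEset, Set.mem_diff,
        Set.mem_setOf_eq]
    have hsubF : (hfin (A - 2)).toFinset ⊆ (hfin (B - 2)).toFinset := by
      intro x hx
      rw [Set.Finite.mem_toFinset] at *
      simp only [Set.mem_setOf_eq] at *
      omega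
    have hcardE : hE.toFinset.card
        = (hfin (B - 2)).toFinset.card - (hfin (A - 2)).toFinset.card := by
      rw [hEfin, Finset.card_sdiff_of_subset hsubF]
    -- real lower bound on card
    have hcardR : ((2:ℝ)) ^ (m' * J₀ * k) ≤ (hE.toFinset.card : ℝ) := by
      have hcast : (hE.toFinset.card : ℝ)
          = ((hfin (B - 2)).toFinset.card : ℝ) - ((hfin (A - 2)).toFinset.card : ℝ) := by
        rw [hcardE, Nat.cast_sub (Finset.card_le_card hsubF)]
      rw [hcast]
      have hbig : c₁ * ((2:ℝ) ^ (m' * J₀ + m₀)) ^ k ≤ ((hfin (B - 2)).toFinset.card : ℝ) := by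
        refine le_trans ?_ (hlow (B - 2))
        apply mul_le_mul_of_nonneg_left _ hc₁.le
        apply pow_le_pow_left₀ (by positivity)
        have h1 : (2:ℕ) ^ (m' * J₀ + m₀) ≤ 1 + (B - 2) := by
          have hBval : B = 2 ^ (m' * J₀ + m₀ + 1) := by
            rw [hB]; congr 1; rw [hJ₀]; ring
          have : 2 ^ (m' * J₀ + m₀ + 1) = 2 * 2 ^ (m' * J₀ + m₀) := by ring
          have hp : 1 ≤ (2:ℕ) ^ (m' * J₀ + m₀) := Nat.one_le_two_pow
          omega
        calc (2:ℝ) ^ (m' * J₀ + m₀) = ((2 ^ (m' * J₀ + m₀) : ℕ) : ℝ) := by push_cast; ring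
          _ ≤ ((1 + (B - 2) : ℕ) : ℝ) := by exact_mod_cast h1
          _ = 1 + ((B - 2 : ℕ) : ℝ) := by push_cast; ring
      have hsmall : ((hfin (A - 2)).toFinset.card : ℝ) ≤ c₂ * ((2:ℝ) ^ (m' * J₀)) ^ k := by
        refine (hupp (A - 2)).trans ?_
        apply mul_le_mul_of_nonneg_left _ hc₂.le
        apply pow_le_pow_left₀ (by positivity)
        have h1 : 1 + (A - 2) ≤ A := by omega
        calc (1 + ((A - 2 : ℕ) : ℝ)) = ((1 + (A - 2) : ℕ) : ℝ) := by push_cast; ring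
          _ ≤ ((A : ℕ) : ℝ) := by exact_mod_cast h1
          _ = (2:ℝ) ^ (m' * J₀) := by rw [hA]; push_cast; ring
      have hexp : c₁ * ((2:ℝ) ^ (m' * J₀ + m₀)) ^ k - c₂ * ((2:ℝ) ^ (m' * J₀)) ^ k
          ≥ (2:ℝ) ^ (m' * J₀ * k) := by
        have e1 : ((2:ℝ) ^ (m' * J₀ + m₀)) ^ k = (2:ℝ) ^ (m' * J₀ * k) * (2:ℝ) ^ (m₀ * k) := by
          rw [← pow_mul, ← pow_add]; ring_nf
        have e2 : ((2:ℝ) ^ (m' * J₀)) ^ k = (2:ℝ) ^ (m' * J₀ * k) := by rw [← pow_mul]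
        rw [e1, e2]
        have hp : (0:ℝ) < (2:ℝ) ^ (m' * J₀ * k) := by positivity
        nlinarith
      linarith
    -- term lower bound
    have hterm : ∀ x ∈ {x : X | Nat.log 2 (1 + ℓ x) / J₀ = m'},
        ENNReal.ofReal (((B:ℕ):ℝ) ^ (-s)) ≤ f x := by
      intro x hx
      apply ENNReal.ofReal_le_ofReal
      apply Real.rpow_le_rpow_of_nonpos (by positivity) _ (by linarith)
      rw [hEset] at hx
      obtain ⟨h1, -⟩ := hx
      simp only [Set.mem_setOf_eq] at h1
      have : 1 + ℓ x ≤ B := by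
        have hB2 : 2 ≤ B := le_trans hA2 hAB
        omega
      calc (1 + (ℓ x : ℝ)) = ((1 + ℓ x : ℕ) : ℝ) := by push_cast; ring
        _ ≤ (B : ℝ) := by exact_mod_cast this
    calc δ ≤ ENNReal.ofReal ((2:ℝ) ^ (m' * J₀ * k) * ((B:ℕ):ℝ) ^ (-s)) := by
          rw [hδ]
          apply ENNReal.ofReal_le_ofReal
          have hBr : ((B:ℕ):ℝ) = (2:ℝ) ^ (((m' + 1) * J₀ : ℕ) : ℝ) := by
            rw [hB, Real.rpow_natCast]; push_cast; ring
          rw [hBr, ← Real.rpow_natCast (2:ℝ) (m' * J₀ * k), ← Real.rpow_mul (by norm_num),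
            ← Real.rpow_add two_pos]
          apply Real.rpow_le_rpow_of_exponent_le one_le_two
          push_cast
          nlinarith [mul_nonneg (mul_nonneg (by positivity : (0:ℝ) ≤ (m:ℝ)+1)
            (by positivity : (0:ℝ) ≤ (m₀:ℝ)+1)) (sub_nonneg.2 hs),
            mul_nonneg (mul_nonneg (Nat.cast_nonneg (α := ℝ) m') (Nat.cast_nonneg (α := ℝ) J₀)) (sub_nonneg.2 hs)]
      _ = ENNReal.ofReal ((2:ℝ) ^ (m' * J₀ * k)) * ENNReal.ofReal (((B:ℕ):ℝ) ^ (-s)) := by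
          rw [ENNReal.ofReal_mul (by positivity)]
      _ ≤ (hE.toFinset.card : ℝ≥0∞) * ENNReal.ofReal (((B:ℕ):ℝ) ^ (-s)) := by
          apply mul_le_mul_left
          rw [← ENNReal.ofReal_natCast]
          exact ENNReal.ofReal_le_ofReal hcardR
      _ ≤ ∑' x : {x | Nat.log 2 (1 + ℓ x) / J₀ = m'}, f x.1 :=
          aux_card_mul_le_tsum hE f _ hterm
  rw [eq_top_iff]
  calc (⊤:ℝ≥0∞) = ∑' _ : ℕ, δ := (ENNReal.tsum_const_eq_top_of_ne_zero hδpos).symm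
    _ ≤ ∑' m : ℕ, (∑' x : {x // Nat.log 2 (1 + ℓ x) / J₀ = m + 1}, f x.1) :=
        ENNReal.tsum_le_tsum (fun m => key m)
    _ ≤ _ := Summable.tsum_le_tsum_of_inj (fun m => m + 1) (fun a b h => by simpa using h)
        (fun c _ => zero_le) (fun m => le_rfl) ENNReal.summable ENNReal.summable

/-- **Convergence criterion for polynomial growth**: if `ℓ : X → ℕ` has balls
`{x : ℓ x ≤ n}` finite with cardinality two-sidedly comparable to `(1+n)^k`
(`k ≥ 1`), then `∑'_{x ∈ X} (1 + ℓ x)^{-s}` is finite if and only if `s > k`. -/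
theorem tsum_inv_length_pow_finite_iff {X : Type*} [Countable X]
    (ℓ : X → ℕ) (k : ℕ) (hk : 0 < k) (c₁ c₂ : ℝ) (hc₁ : 0 < c₁) (hc₂ : 0 < c₂)
    (hfin : ∀ n : ℕ, {x : X | ℓ x ≤ n}.Finite)
    (hlow : ∀ n : ℕ, c₁ * (1 + (n : ℝ)) ^ k ≤ ((hfin n).toFinset.card : ℝ))
    (hupp : ∀ n : ℕ, ((hfin n).toFinset.card : ℝ) ≤ c₂ * (1 + (n : ℝ)) ^ k)
    (s : ℝ) :
    (∑' x : X, ENNReal.ofReal ((1 + (ℓ x : ℝ)) ^ (-s))) ≠ ∞ ↔ (k : ℝ) < s := by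
  constructor
  · intro hne
    by_contra hcon
    push_neg at hcon
    rcases le_or_gt s 0 with hs0 | hs0
    · -- terms are at least 1 and X is infinite
      have hinfX : Infinite X := by
        rw [← not_finite_iff_infinite]
        intro hfinX
        haveI := Fintype.ofFinite X
        obtain ⟨n, hn⟩ := exists_nat_gt ((Fintype.card X : ℝ) / c₁)
        have hcard : ((hfin n).toFinset.card : ℝ) ≤ (Fintype.card X : ℝ) := by
          exact_mod_cast Finset.card_le_univ _
        have h1 : (Fintype.card X : ℝ) < c₁ * (1 + (n : ℝ)) ^ k := by
          have h2 : (1 + (n : ℝ)) ≤ (1 + (n : ℝ)) ^ k := by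
            apply le_self_pow₀ (by linarith [Nat.cast_nonneg (α := ℝ) n]) hk.ne'
          have h3 : (Fintype.card X : ℝ) < c₁ * n := by
            rw [div_lt_iff₀ hc₁] at hn; linarith
          nlinarith [Nat.cast_nonneg (α := ℝ) n]
        linarith [hlow n]
      apply hne
      rw [eq_top_iff]
      calc (⊤:ℝ≥0∞) = ∑' _ : X, (1:ℝ≥0∞) :=
            (ENNReal.tsum_const_eq_top_of_ne_zero one_ne_zero).symm
        _ ≤ _ := by
            apply ENNReal.tsum_le_tsum
            intro x
            rw [← ENNReal.ofReal_one]
            apply ENNReal.ofReal_le_ofReal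
            calc (1:ℝ) = (1:ℝ) ^ (-s) := (Real.one_rpow _).symm
              _ ≤ (1 + (ℓ x : ℝ)) ^ (-s) :=
                  Real.rpow_le_rpow zero_le_one (by linarith [Nat.cast_nonneg (α := ℝ) (ℓ x)])
                    (by linarith)
    · exact hne (aux_div ℓ k hk c₁ c₂ hc₁ hc₂ hfin hlow hupp s hcon hs0)
  · exact aux_conv ℓ k hk c₂ hc₂ hfin hupp s
end

section
/- Let f ∈ L^∞(𝕋) be such that for every n ∈ ℤ the Fourier coefficient f̂(n) is a nonnegative real number. Then the family (f̂(n))_{n ∈ ℤ} is summable and ∑_{n ∈ ℤ} f̂(n) = ‖f‖_{L^∞(𝕋)}, where ‖f‖_{L^∞(𝕋)} is the essential supremum of |f|. -/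
open MeasureTheory AddCircle Complex Filter
open scoped ENNReal NNReal ComplexConjugate

lemma myintegral_fourier (n : ℤ) :
    ∫ x : AddCircle (1 : ℝ), fourier n x ∂haarAddCircle = if n = 0 then 1 else 0 := by
  split_ifs with h
  · subst h
    simp_rw [fourier_zero]
    simp
  · exact integral_eq_zero_of_add_right_eq_neg
      (fourier_add_half_inv_index h one_pos)

lemma mynorm_fourier (n : ℤ) (x : AddCircle (1 : ℝ)) : ‖fourier n x‖ = 1 := by
  simp [fourier_apply, Circle.norm_coe]

lemma myintegrable_fourier_mul {f : AddCircle (1 : ℝ) → ℂ}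
    (hf : Integrable f haarAddCircle) (m : ℤ) :
    Integrable (fun x => fourier m x * f x) haarAddCircle :=
  hf.bdd_mul ((fourier m).continuous.aestronglyMeasurable)
    (Filter.Eventually.of_forall (fun x => (le_of_eq (mynorm_fourier m x) : ‖fourier m x‖ ≤ 1)))

lemma myintegral_fourier_mul {f : AddCircle (1 : ℝ) → ℂ} (m : ℤ) :
    ∫ x, fourier m x * f x ∂haarAddCircle = fourierCoeff f (-m) := by
  rw [fourierCoeff]
  simp_rw [neg_neg, smul_eq_mul]

/-- Key kernel computation: for `N : ℤ`, `0 ≤ N`, with `g = ∑_{0≤j≤N} fourier j`,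
the quantity `∑_{j,k} f̂(k-j)` is bounded by `C * (N+1)`. -/
lemma key_bound {f : AddCircle (1 : ℝ) → ℂ}
    (hf : MemLp f ∞ haarAddCircle) (N : ℤ) (hN : 0 ≤ N) :
    (∑ p ∈ (Finset.Icc (0:ℤ) N) ×ˢ (Finset.Icc (0:ℤ) N),
        (fourierCoeff f (p.2 - p.1)).re)
      ≤ (eLpNorm f ∞ haarAddCircle).toReal * ((N : ℝ) + 1) := by
  set μ : Measure (AddCircle (1:ℝ)) := haarAddCircle with hμ
  set C : ℝ := (eLpNorm f ∞ μ).toReal with hCdef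
  have hint : Integrable f μ := hf.integrable le_top
  have hbd : ∀ᵐ x ∂μ, ‖f x‖ ≤ C := by
    have h1 := enorm_ae_le_eLpNormEssSup f μ
    have hfin : eLpNormEssSup f μ ≠ ⊤ := by
      rw [← eLpNorm_exponent_top]; exact hf.2.ne
    filter_upwards [h1] with x hx
    calc ‖f x‖ = ((‖f x‖₊ : ℝ≥0∞)).toReal := by simp
      _ ≤ (eLpNormEssSup f μ).toReal := ENNReal.toReal_mono hfin hx
      _ = C := by rw [hCdef, eLpNorm_exponent_top]
  set F : Finset ℤ := Finset.Icc (0:ℤ) N with hF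
  set g : AddCircle (1:ℝ) → ℂ := fun x => ∑ j ∈ F, fourier j x with hg
  have hgcont : Continuous g := by
    apply continuous_finset_sum
    exact fun j _ => (fourier j).continuous
  have hprod : ∀ x, g x * conj (g x) = ∑ p ∈ F ×ˢ F, fourier (p.1 - p.2) x := by
    intro x
    rw [Finset.sum_product]
    rw [hg]
    simp only [map_sum, ← fourier_neg]
    rw [Finset.sum_mul_sum]
    refine Finset.sum_congr rfl fun j _ => Finset.sum_congr rfl fun k _ => ?_
    rw [← fourier_add, sub_eq_add_neg]
  -- complex integral of the kernel alone
  have I2 : ∫ x, g x * conj (g x) ∂μ = ((N : ℂ) + 1) := by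
    calc ∫ x, g x * conj (g x) ∂μ
        = ∫ x, ∑ p ∈ F ×ˢ F, fourier (p.1 - p.2) x ∂μ := by
          exact integral_congr_ae (Filter.Eventually.of_forall fun x => hprod x)
      _ = ∑ p ∈ F ×ˢ F, ∫ x, fourier (p.1 - p.2) x ∂μ := by
          exact integral_finset_sum _ fun p _ =>
            ((fourier (p.1 - p.2)).continuous.integrable_of_hasCompactSupport
              (HasCompactSupport.of_compactSpace _))
      _ = ∑ p ∈ F ×ˢ F, if p.1 - p.2 = 0 then (1:ℂ) else 0 := by
          exact Finset.sum_congr rfl fun p _ => myintegral_fourier _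
      _ = ((N : ℂ) + 1) := by
          rw [Finset.sum_product]
          simp only [sub_eq_zero]
          simp only [Finset.sum_ite_eq, hF, Finset.mem_Icc]
          have hone : ∀ x ∈ Finset.Icc (0:ℤ) N,
              (if 0 ≤ x ∧ x ≤ N then (1:ℂ) else 0) = 1 := fun x hx =>
            if_pos (Finset.mem_Icc.mp hx)
          rw [Finset.sum_congr rfl hone, Finset.sum_const, Int.card_Icc]
          have h1 : (N + 1 - 0).toNat = N.toNat + 1 := by omega
          have h2 : ((N.toNat : ℤ) : ℂ) = (N : ℂ) := by
            exact_mod_cast congrArg (fun z : ℤ => (z : ℂ)) (Int.toNat_of_nonneg hN)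
          rw [h1, nsmul_eq_mul, mul_one]
          push_cast at h2 ⊢
          rw [h2]
  have hgint : Integrable (fun x => g x * conj (g x)) μ :=
    (hgcont.mul (continuous_star.comp hgcont)).integrable_of_hasCompactSupport
      (HasCompactSupport.of_compactSpace _)
  have I2' : ∫ x, Complex.normSq (g x) ∂μ = (N : ℝ) + 1 := by
    have h := integral_re (𝕜 := ℂ) (f := fun x => g x * conj (g x)) (μ := μ) hgint
    simp only [RCLike.re_eq_complex_re] at h
    calc ∫ x, Complex.normSq (g x) ∂μ
        = ∫ x, (g x * conj (g x)).re ∂μ := by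
          simp_rw [Complex.mul_conj, Complex.ofReal_re]
      _ = (∫ x, g x * conj (g x) ∂μ).re := h
      _ = (N : ℝ) + 1 := by rw [I2]; simp
  have I1 : ∫ x, g x * conj (g x) * f x ∂μ
      = ∑ p ∈ F ×ˢ F, fourierCoeff f (p.2 - p.1) := by
    calc ∫ x, g x * conj (g x) * f x ∂μ
        = ∫ x, ∑ p ∈ F ×ˢ F, fourier (p.1 - p.2) x * f x ∂μ := by
          refine integral_congr_ae (Filter.Eventually.of_forall fun x => ?_)
          show g x * conj (g x) * f x = ∑ p ∈ F ×ˢ F, fourier (p.1 - p.2) x * f x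
          rw [hprod x, Finset.sum_mul]
      _ = ∑ p ∈ F ×ˢ F, ∫ x, fourier (p.1 - p.2) x * f x ∂μ :=
          integral_finset_sum _ fun p _ => myintegrable_fourier_mul hint _
      _ = ∑ p ∈ F ×ˢ F, fourierCoeff f (p.2 - p.1) := by
          refine Finset.sum_congr rfl fun p _ => ?_
          rw [myintegral_fourier_mul, neg_sub]
  have hker_int : Integrable (fun x => C * Complex.normSq (g x)) μ :=
    ((Complex.continuous_normSq.comp hgcont).integrable_of_hasCompactSupport
      (HasCompactSupport.of_compactSpace _)).const_mul C
  have hub : ‖∫ x, g x * conj (g x) * f x ∂μ‖ ≤ ∫ x, C * Complex.normSq (g x) ∂μ := by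
    refine norm_integral_le_of_norm_le hker_int ?_
    filter_upwards [hbd] with x hx
    rw [norm_mul, Complex.mul_conj]
    have h1 : ‖((Complex.normSq (g x) : ℝ) : ℂ)‖ = Complex.normSq (g x) := by
      rw [Complex.norm_real, Real.norm_eq_abs, _root_.abs_of_nonneg (Complex.normSq_nonneg _)]
    rw [h1, mul_comm]
    exact mul_le_mul_of_nonneg_right hx (Complex.normSq_nonneg _)
  calc ∑ p ∈ F ×ˢ F, (fourierCoeff f (p.2 - p.1)).re
      = (∫ x, g x * conj (g x) * f x ∂μ).re := by rw [I1, Complex.re_sum]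
    _ ≤ ‖∫ x, g x * conj (g x) * f x ∂μ‖ := by
        exact Complex.re_le_norm _
    _ ≤ ∫ x, C * Complex.normSq (g x) ∂μ := hub
    _ = C * ((N : ℝ) + 1) := by rw [integral_const_mul, I2']

lemma sum_Icc_le {f : AddCircle (1 : ℝ) → ℂ}
    (hf : MemLp f ∞ haarAddCircle)
    (hpos : ∀ n : ℤ, 0 ≤ (fourierCoeff f n).re) (M : ℕ) :
    ∑ m ∈ Finset.Icc (-(M:ℤ)) M, (fourierCoeff f m).re
      ≤ (eLpNorm f ∞ haarAddCircle).toReal := by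
  set C : ℝ := (eLpNorm f ∞ haarAddCircle).toReal with hCdef
  set P : ℝ := ∑ m ∈ Finset.Icc (-(M:ℤ)) M, (fourierCoeff f m).re with hPdef
  have key : ∀ K : ℕ, ((K:ℝ) + 1) * P ≤ C * (2*(M:ℝ) + K + 1) := by
    intro K
    set N : ℤ := 2*(M:ℤ) + K with hNdef
    have hN : (0:ℤ) ≤ N := by positivity
    have hkb := key_bound hf N hN
    set F : Finset ℤ := Finset.Icc (0:ℤ) N with hF
    set s : Finset (ℤ × ℤ) := (Finset.Icc (-(M:ℤ)) M) ×ˢ (Finset.Icc (M:ℤ) (N - M))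
      with hs
    set e : ℤ × ℤ → ℤ × ℤ := fun q => (q.2, q.2 + q.1) with he
    have hinj : ∀ x ∈ s, ∀ y ∈ s, e x = e y → x = y := by
      intro a _ b _ hab
      cases a; cases b
      simp only [he, Prod.mk.injEq] at hab ⊢
      omega
    have himg : s.image e ⊆ F ×ˢ F := by
      intro p hp
      simp only [Finset.mem_image] at hp
      obtain ⟨q, hq, rfl⟩ := hp
      simp only [hs, he, hF, Finset.mem_product, Finset.mem_Icc] at hq ⊢
      omega
    have hsum1 : ∑ p ∈ s.image e, (fourierCoeff f (p.2 - p.1)).re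
        = ((K:ℝ) + 1) * P := by
      rw [Finset.sum_image hinj]
      have : ∀ q ∈ s, (fourierCoeff f ((e q).2 - (e q).1)).re
          = (fourierCoeff f q.1).re := by
        intro q _
        simp only [he]
        rw [add_sub_cancel_left]
      rw [Finset.sum_congr rfl this, hs, Finset.sum_product]
      have hcard : (Finset.Icc (M:ℤ) (N - M)).card = K + 1 := by
        rw [Int.card_Icc]; omega
      have : ∀ m ∈ Finset.Icc (-(M:ℤ)) M,
          ∑ _t ∈ Finset.Icc (M:ℤ) (N - M), (fourierCoeff f m).re
            = ((K:ℝ) + 1) * (fourierCoeff f m).re := by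
        intro m _
        rw [Finset.sum_const, hcard, nsmul_eq_mul]
        push_cast
        ring
      rw [Finset.sum_congr rfl this, ← Finset.mul_sum, hPdef]
    have hle : ((K:ℝ) + 1) * P
        ≤ ∑ p ∈ F ×ˢ F, (fourierCoeff f (p.2 - p.1)).re := by
      rw [← hsum1]
      exact Finset.sum_le_sum_of_subset_of_nonneg himg fun p _ _ => hpos _
    refine hle.trans (hkb.trans (le_of_eq ?_))
    have : ((N:ℝ)) = 2*(M:ℝ) + K := by rw [hNdef]; push_cast; ring
    rw [this]
  -- pass to the limit K → ∞
  have hC0 : 0 ≤ C := ENNReal.toReal_nonneg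
  have htend : Filter.Tendsto
      (fun K : ℕ => C + (2*(M:ℝ)*C) * (1/((K:ℝ)+1))) Filter.atTop (nhds C) := by
    have h1 : Filter.Tendsto (fun _ : ℕ => C) Filter.atTop (nhds C) :=
      tendsto_const_nhds
    have h2' : Filter.Tendsto (fun _ : ℕ => 2*(M:ℝ)*C) Filter.atTop (nhds (2*(M:ℝ)*C)) :=
      tendsto_const_nhds
    have h2 := h2'.mul tendsto_one_div_add_atTop_nhds_zero_nat
    simpa using h1.add h2
  refine ge_of_tendsto' htend fun K => ?_
  have hKpos : (0:ℝ) < (K:ℝ) + 1 := by positivity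
  have hexp : (C + (2*(M:ℝ)*C) * (1/((K:ℝ)+1))) * ((K:ℝ)+1)
      = C * (2*(M:ℝ) + K + 1) := by
    field_simp
    ring
  have h3 : P * ((K:ℝ)+1) ≤ (C + (2*(M:ℝ)*C) * (1/((K:ℝ)+1))) * ((K:ℝ)+1) := by
    rw [hexp]
    have := key K
    linarith
  exact le_of_mul_le_mul_right h3 hKpos

set_option maxHeartbeats 1000000 in
/-- **Sup-norm of a function with nonnegative Fourier coefficients** (circle case of
the paper's Lemma): if `f ∈ L^∞(𝕋)` has every Fourier coefficient a nonnegative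
real, then `(f̂(n))_{n ∈ ℤ}` is summable and `∑_{n ∈ ℤ} f̂(n) = ‖f‖_{L^∞(𝕋)}`. -/
theorem tsum_fourierCoeff_eq_eLpNorm_top (f : AddCircle (1 : ℝ) → ℂ)
    (hf : MemLp f ∞ haarAddCircle)
    (hpos : ∀ n : ℤ, 0 ≤ (fourierCoeff f n).re ∧ (fourierCoeff f n).im = 0) :
    Summable (fun n : ℤ => (fourierCoeff f n).re) ∧
      ENNReal.ofReal (∑' n : ℤ, (fourierCoeff f n).re) = eLpNorm f ∞ haarAddCircle := by
  have hpos1 : ∀ n, 0 ≤ (fourierCoeff f n).re := fun n => (hpos n).1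
  set C : ℝ := (eLpNorm f ∞ haarAddCircle).toReal with hCdef
  have hboundu : ∀ u : Finset ℤ, ∑ n ∈ u, (fourierCoeff f n).re ≤ C := by
    intro u
    set M : ℕ := u.sup Int.natAbs with hM
    have hsub : u ⊆ Finset.Icc (-(M:ℤ)) M := by
      intro n hn
      have := Finset.le_sup (f := Int.natAbs) hn
      simp only [Finset.mem_Icc]
      omega
    exact (Finset.sum_le_sum_of_subset_of_nonneg hsub fun n _ _ => hpos1 n).trans
      (sum_Icc_le hf hpos1 M)
  have hsum : Summable (fun n : ℤ => (fourierCoeff f n).re) :=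
    summable_of_sum_le hpos1 hboundu
  refine ⟨hsum, le_antisymm ?_ ?_⟩
  · exact ENNReal.ofReal_le_of_le_toReal (Summable.tsum_le_of_sum_le hsum hboundu)
  · -- the reverse inequality via the continuous representative
    have him : ∀ n, fourierCoeff f n = (((fourierCoeff f n).re : ℝ) : ℂ) := fun n =>
      Complex.ext (by simp) (by simp [(hpos n).2])
    have hnorm : ∀ n : ℤ, ‖(fourierCoeff f n • fourier n : C(AddCircle (1:ℝ), ℂ))‖
        = (fourierCoeff f n).re := by
      intro n
      rw [norm_smul (fourierCoeff f n) (fourier n : C(AddCircle (1:ℝ), ℂ)),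
        fourier_norm, mul_one, him n, Complex.norm_real,
        Real.norm_eq_abs, _root_.abs_of_nonneg (hpos1 n)]
      exact (Complex.ofReal_re _).symm
    have hsummableC : Summable (fun n : ℤ =>
        (fourierCoeff f n • fourier n : C(AddCircle (1:ℝ), ℂ))) := by
      refine Summable.of_norm ?_
      simp_rw [hnorm]
      exact hsum
    set g : C(AddCircle (1:ℝ), ℂ) := ∑' n : ℤ, fourierCoeff f n • fourier n with hgdef
    have hgsum : HasSum (fun n : ℤ => fourierCoeff f n • fourier n) g :=
      hsummableC.hasSum
    have hf2 : MemLp f 2 haarAddCircle := hf.mono_exponent le_top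
    set F2 : Lp ℂ 2 haarAddCircle := hf2.toLp f with hF2
    have hcoe : (F2 : AddCircle (1:ℝ) → ℂ) =ᵐ[haarAddCircle] f := hf2.coeFn_toLp
    have hcoeff_eq : ∀ n, fourierCoeff (F2 : AddCircle (1:ℝ) → ℂ) n = fourierCoeff f n := by
      intro n
      simp only [fourierCoeff]
      refine integral_congr_ae (hcoe.mono fun x hx => ?_)
      show fourier (-n) x • (F2 : AddCircle (1:ℝ) → ℂ) x = fourier (-n) x • f x
      rw [hx]
    have hL2a : HasSum (fun i : ℤ => fourierCoeff f i • fourierLp 2 i) F2 := by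
      have := hasSum_fourier_series_L2 F2
      simp_rw [hcoeff_eq] at this
      exact this
    have hL2b : HasSum (fun i : ℤ => fourierCoeff f i • fourierLp 2 i)
        (ContinuousMap.toLp (E := ℂ) 2 haarAddCircle ℂ g) := by
      have h := (ContinuousMap.toLp (E := ℂ) 2 haarAddCircle ℂ).hasSum hgsum
      simpa only [_root_.map_smul] using h
    have hF2g : F2 = ContinuousMap.toLp (E := ℂ) 2 haarAddCircle ℂ g := hL2a.unique hL2b
    have hae : f =ᵐ[haarAddCircle] ⇑g := by
      refine hcoe.symm.trans ?_
      rw [hF2g]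
      exact ContinuousMap.coeFn_toLp _ _
    have hbound : ∀ x, ‖g x‖ ≤ ∑' n : ℤ, (fourierCoeff f n).re := by
      intro x
      have hx : HasSum (fun n : ℤ =>
          (fourierCoeff f n • fourier n : C(AddCircle (1:ℝ), ℂ)) x) (g x) := by
        convert (ContinuousMap.evalCLM (R := ℂ) (M := ℂ) (α := AddCircle (1:ℝ)) x).hasSum hgsum <;> rfl
      have hnormx : ∀ n : ℤ,
          ‖(fourierCoeff f n • fourier n : C(AddCircle (1:ℝ), ℂ)) x‖
            = (fourierCoeff f n).re := by
        intro n
        rw [ContinuousMap.smul_apply, norm_smul, mynorm_fourier, mul_one, him n,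
          Complex.norm_real, Real.norm_eq_abs, _root_.abs_of_nonneg (hpos1 n)]
        exact (Complex.ofReal_re _).symm
      have hsummable_norm : Summable (fun n : ℤ =>
          ‖(fourierCoeff f n • fourier n : C(AddCircle (1:ℝ), ℂ)) x‖) := by
        simp_rw [hnormx]; exact hsum
      calc ‖g x‖ = ‖∑' n : ℤ, (fourierCoeff f n • fourier n : C(AddCircle (1:ℝ), ℂ)) x‖ := by
            rw [hx.tsum_eq]
        _ ≤ ∑' n : ℤ, ‖(fourierCoeff f n • fourier n : C(AddCircle (1:ℝ), ℂ)) x‖ :=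
            norm_tsum_le_tsum_norm hsummable_norm
        _ = ∑' n : ℤ, (fourierCoeff f n).re := by
            exact tsum_congr hnormx
    calc eLpNorm f ∞ haarAddCircle = eLpNorm (⇑g) ∞ haarAddCircle := eLpNorm_congr_ae hae
      _ ≤ ENNReal.ofReal (∑' n : ℤ, (fourierCoeff f n).re) := by
          have h := eLpNorm_le_of_ae_bound (μ := haarAddCircle) (p := (∞ : ℝ≥0∞))
            (f := ⇑g) (Filter.Eventually.of_forall hbound)
          simpa using h
end
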